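/- Let (L, v) be a complete discretely valued skew field, f ∈ L[t] monic of degree d with single-edge Newton polygon of slope s, and M = L[t]/fL[t]. If u, w ∈ ℤ with u ≠ 0 and Λ' is an O-lattice in M with σʷ tᵘ Λ' = Λ', then w/u = s. -/

import Mathlib

/-- The valuation of a coefficient, as an extended real number. -/
noncomputable def evv {L : Type*} (v : L → WithTop ℤ) (x : L) : EReal :=
  WithTop.recTopCoe ⊤ (fun n : ℤ => ((n : ℝ) : EReal)) (v x)

/-- The Newton polygon (lower convex hull function) of a polynomial. -/
noncomputable def NP {L : Type*} [DivisionRing L] (v : L → WithTop ℤ)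
    (f : Polynomial L) (x : ℝ) : EReal :=
  sSup {y : EReal | ∃ a b : ℝ,
    (∀ i ∈ f.support, ((a * i + b : ℝ) : EReal) ≤ evv v (f.coeff i)) ∧
    y = ((a * x + b : ℝ) : EReal)}

/-!
Measure an element of `M ≅ L[t]/L[t]f` through its representative `p` of degree `< d`: say it
lies above level `x` when `v(pᵢ) ≥ x + s i` for all `i`. Since the Newton polygon of `f` is the
single segment of slope `s` from `(0, -s d)` to `(d, 0)`, multiplication by `t` lowers the level
by exactly `s` (reducing `t p` modulo `f` subtracts `c f`, and `f` lies on or above that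
segment), and multiplication by `σ` raises it by `1`. A finitely generated `O`-lattice lies above
some fixed level, while a nonzero element lies above only a bounded set of levels. Iterating
`σʷ t^{u⁺} Λ' = t^{u⁻} Λ'` therefore forces the two level shifts `w - s u⁺` and `-s u⁻` to agree,
that is `w = s u`.
-/

open Polynomial

section Reduce

open MulOpposite

theorem Polynomial.degree_opRingEquiv {R : Type*} [Semiring R] (p : R[X]ᵐᵒᵖ) :
    (opRingEquiv R p).degree = (unop p).degree := by
  rcases eq_or_ne p 0 with rfl | hp
  · simp
  · rw [degree_eq_natDegree (by simpa using hp), degree_eq_natDegree (by simpa using hp),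
      natDegree_opRingEquiv]

/-- `modByMonic` divides on the left; division on the right goes through `Rᵐᵒᵖ[X]`. -/
theorem Polynomial.Monic.exists_eq_mul_add {R : Type*} [Ring R] [Nontrivial R] {f : R[X]}
    (hf : f.Monic) (p : R[X]) : ∃ q r : R[X], p = q * f + r ∧ r.degree < f.degree := by
  set F := opRingEquiv R (op f)
  set P := opRingEquiv R (op p)
  have hF : F.Monic := by simp [F, Monic, leadingCoeff_opRingEquiv, hf.leadingCoeff]
  refine ⟨unop ((opRingEquiv R).symm (P /ₘ F)), unop ((opRingEquiv R).symm (P %ₘ F)), ?_, ?_⟩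
  · apply op_injective
    apply (opRingEquiv R).injective
    simp only [op_add, op_mul, op_unop, map_add, map_mul, RingEquiv.apply_symm_apply]
    exact ((add_comm _ _).trans (modByMonic_add_div P F)).symm
  · rw [← degree_opRingEquiv, RingEquiv.apply_symm_apply,
      show f.degree = F.degree by simp [F, degree_opRingEquiv]]
    exact degree_modByMonic_lt P hF

theorem Polynomial.Monic.eq_zero_of_degree_mul_lt {R : Type*} [Semiring R] [Nontrivial R]
    {f q : R[X]} (hf : f.Monic) (h : (q * f).degree < f.degree) : q = 0 := by
  by_contra hq
  rw [hf.degree_mul] at h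
  exact h.not_ge (le_add_of_nonneg_left (zero_le_degree_iff.mpr hq))

variable {R : Type*} [Ring R] [Nontrivial R] {f : R[X]}

theorem exists_degree_lt_mk_eq (hf : f.Monic) (q : R[X] ⧸ R[X] ∙ f) :
    ∃ p : R[X], p.degree < f.degree ∧ Submodule.Quotient.mk p = q := by
  obtain ⟨p, rfl⟩ := Submodule.Quotient.mk_surjective _ q
  obtain ⟨a, r, rfl, hr⟩ := hf.exists_eq_mul_add p
  refine ⟨r, hr, (Submodule.Quotient.eq _).mpr ?_⟩
  rw [show r - (a * f + r) = -a • f by simp]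
  exact Submodule.smul_mem _ _ (Submodule.mem_span_singleton_self f)

theorem eq_of_degree_lt_of_mk_eq (hf : f.Monic) {p₁ p₂ : R[X]} (h₁ : p₁.degree < f.degree)
    (h₂ : p₂.degree < f.degree)
    (h : (Submodule.Quotient.mk p₁ : R[X] ⧸ R[X] ∙ f) = Submodule.Quotient.mk p₂) :
    p₁ = p₂ := by
  obtain ⟨a, ha⟩ := Submodule.mem_span_singleton.mp ((Submodule.Quotient.eq _).mp h)
  rw [smul_eq_mul] at ha
  have ha0 : a = 0 := hf.eq_zero_of_degree_mul_lt
    (by rw [ha]; exact (degree_sub_le _ _).trans_lt (max_lt h₁ h₂))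
  rw [← sub_eq_zero, ← ha, ha0, zero_mul]

theorem nontrivial_quotient_of_natDegree_pos (hf : f.Monic) (hd : 0 < f.natDegree) :
    Nontrivial (R[X] ⧸ R[X] ∙ f) := by
  refine ⟨0, Submodule.Quotient.mk 1,
    fun h => one_ne_zero (eq_of_degree_lt_of_mk_eq hf ?_ ?_ h.symm)⟩
  · rwa [degree_one, degree_eq_natDegree hf.ne_zero, Nat.cast_pos]
  · simp [degree_eq_natDegree hf.ne_zero]

noncomputable def reduce (hf : f.Monic) (q : R[X] ⧸ R[X] ∙ f) : R[X] :=
  (exists_degree_lt_mk_eq hf q).choose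

theorem degree_reduce_lt (hf : f.Monic) (q : R[X] ⧸ R[X] ∙ f) :
    (reduce hf q).degree < f.degree :=
  (exists_degree_lt_mk_eq hf q).choose_spec.1

theorem mk_reduce (hf : f.Monic) (q : R[X] ⧸ R[X] ∙ f) :
    Submodule.Quotient.mk (reduce hf q) = q :=
  (exists_degree_lt_mk_eq hf q).choose_spec.2

theorem reduce_eq (hf : f.Monic) {q : R[X] ⧸ R[X] ∙ f} {p : R[X]} (hp : p.degree < f.degree)
    (h : Submodule.Quotient.mk p = q) : reduce hf q = p :=
  eq_of_degree_lt_of_mk_eq hf (degree_reduce_lt hf q) hp (by rw [mk_reduce, h])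

theorem reduce_ne_zero (hf : f.Monic) {q : R[X] ⧸ R[X] ∙ f} (hq : q ≠ 0) : reduce hf q ≠ 0 :=
  fun h => hq (by rw [← mk_reduce hf q, h, Submodule.Quotient.mk_zero])

theorem reduce_zero (hf : f.Monic) : reduce hf (0 : R[X] ⧸ R[X] ∙ f) = 0 :=
  reduce_eq hf (bot_lt_iff_ne_bot.mpr (degree_ne_bot.mpr hf.ne_zero)) rfl

theorem reduce_add (hf : f.Monic) (q₁ q₂ : R[X] ⧸ R[X] ∙ f) :
    reduce hf (q₁ + q₂) = reduce hf q₁ + reduce hf q₂ :=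
  reduce_eq hf ((degree_add_le _ _).trans_lt (max_lt (degree_reduce_lt hf q₁)
    (degree_reduce_lt hf q₂))) (by rw [Submodule.Quotient.mk_add, mk_reduce, mk_reduce])

theorem reduce_C_smul (hf : f.Monic) (a : R) (q : R[X] ⧸ R[X] ∙ f) :
    reduce hf (C a • q) = C a * reduce hf q := by
  refine reduce_eq hf ?_ (by rw [← smul_eq_mul, Submodule.Quotient.mk_smul, mk_reduce])
  rw [← smul_eq_C_mul]
  exact (degree_smul_le a _).trans_lt (degree_reduce_lt hf q)

theorem reduce_X_smul (hf : f.Monic) (q : R[X] ⧸ R[X] ∙ f) :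
    reduce hf ((X : R[X]) • q) =
      X * reduce hf q - C ((X * reduce hf q).coeff f.natDegree) * f := by
  set r := reduce hf q
  have hr : r.degree < f.natDegree := degree_eq_natDegree hf.ne_zero ▸ degree_reduce_lt hf q
  refine reduce_eq hf ?_ ?_
  · rw [degree_eq_natDegree hf.ne_zero, degree_lt_iff_coeff_zero]
    intro m hm
    rw [coeff_sub, coeff_C_mul]
    rcases hm.eq_or_lt with rfl | hlt
    · rw [hf.coeff_natDegree, mul_one, sub_self]
    · obtain ⟨k, rfl⟩ := Nat.exists_eq_add_of_lt hlt
      rw [coeff_X_mul, coeff_eq_zero_of_degree_lt (p := r) (hr.trans_le (by norm_cast; omega)),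
        coeff_eq_zero_of_natDegree_lt (p := f) (by omega), mul_zero, sub_zero]
  · rw [Submodule.Quotient.mk_sub, ← smul_eq_mul (C _), Submodule.Quotient.mk_smul,
      (Submodule.Quotient.mk_eq_zero _).mpr (Submodule.mem_span_singleton_self f), smul_zero,
      sub_zero, ← smul_eq_mul, Submodule.Quotient.mk_smul, mk_reduce]

end Reduce

section Shifts

open scoped Pointwise

variable {R N : Type*}

/-- Read `B x m` as "the gauge of `m` is at least `x`": then `r` adds `α` to the gauge. -/
def ShiftsBy [SMul R N] (B : ℝ → N → Prop) (r : R) (α : ℝ) : Prop :=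
  ∀ x m, B (x + α) (r • m) ↔ B x m

namespace ShiftsBy

variable {B : ℝ → N → Prop} {r r' : R} {α β : ℝ}

theorem comp [SMul R N] {M : Type*} [SMul R M] (h : ShiftsBy B r α) (g : M → N)
    (hg : ∀ m, g (r • m) = r • g m) : ShiftsBy (fun x m => B x (g m)) r α := fun x m => by
  simp only [hg]
  exact h x (g m)

variable [Monoid R] [MulAction R N]

theorem mul (h : ShiftsBy B r α) (h' : ShiftsBy B r' β) : ShiftsBy B (r * r') (α + β) :=
  fun x m => by rw [mul_smul, show x + (α + β) = x + β + α by ring, h, h']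

theorem pow (h : ShiftsBy B r α) : ∀ k : ℕ, ShiftsBy B (r ^ k) (k * α)
  | 0 => fun x m => by simp
  | k + 1 => by
    rw [pow_succ, show ((k + 1 : ℕ) : ℝ) * α = k * α + α by push_cast; ring]
    exact (h.pow k).mul h

end ShiftsBy

theorem smul_pow_subset_smul_pow [Monoid R] [MulAction R N] {P Q : R} (hPQ : Commute P Q)
    {Λ : Set N} (h : P • Λ ⊆ Q • Λ) : ∀ k : ℕ, P ^ k • Λ ⊆ Q ^ k • Λ
  | 0 => by simp
  | k + 1 => calc
      P ^ (k + 1) • Λ = P ^ k • P • Λ := by rw [pow_succ, mul_smul]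
      _ ⊆ P ^ k • Q • Λ := Set.smul_set_mono h
      _ = Q • P ^ k • Λ := by rw [smul_smul, smul_smul, ((hPQ.pow_left k).eq)]
      _ ⊆ Q • Q ^ k • Λ := Set.smul_set_mono (smul_pow_subset_smul_pow hPQ h k)
      _ = Q ^ (k + 1) • Λ := by rw [pow_succ', mul_smul]

/-- Writing `P ^ k • m₀ ∈ Q ^ k • Λ` as `Q ^ k • y` with `y ∈ Λ` gives
`A + k (β - α) ≤ sup {x | B x m₀}` for every `k`. -/
theorem ShiftsBy.le_of_smul_subset [Monoid R] [MulAction R N] {B : ℝ → N → Prop} {P Q : R} {α β : ℝ}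
    (hP : ShiftsBy B P α) (hQ : ShiftsBy B Q β) (hPQ : Commute P Q) {Λ : Set N}
    (h : P • Λ ⊆ Q • Λ) {A : ℝ} (hA : ∀ m ∈ Λ, B A m) {m₀ : N} (hm₀ : m₀ ∈ Λ)
    (hbdd : BddAbove {x | B x m₀}) : β ≤ α := by
  obtain ⟨c, hc⟩ := hbdd
  have key (k : ℕ) : A + k * (β - α) ≤ c := by
    obtain ⟨y, hy, hyk : Q ^ k • y = P ^ k • m₀⟩ :=
      smul_pow_subset_smul_pow hPQ h k (Set.smul_mem_smul_set hm₀)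
    have := (hQ.pow k A y).mpr (hA y hy)
    rw [hyk, show A + k * β = A + k * (β - α) + k * α by ring, hP.pow k] at this
    exact hc this
  by_contra! hlt
  obtain ⟨k, hk⟩ := exists_nat_gt ((c - A) / (β - α))
  rw [div_lt_iff₀ (sub_pos.mpr hlt)] at hk
  linarith [key k]

end Shifts

theorem Submodule.FG.exists_le_of_antitone {O M ι : Type*} [Semiring O] [AddCommMonoid M]
    [Module O M] [SemilatticeInf ι] [Nonempty ι] {S : ι → Submodule O M} (hS : Antitone S)
    (hcover : ∀ m, ∃ i, m ∈ S i) {N : Submodule O M} (hN : N.FG) : ∃ i, N ≤ S i := by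
  obtain ⟨T, rfl⟩ := hN
  choose g hg using hcover
  obtain ⟨i, hi⟩ := (T.finite_toSet.image g).bddBelow
  exact ⟨i, Submodule.span_le.mpr fun m hm => hS (hi (Set.mem_image_of_mem g hm)) (hg m)⟩

theorem map_one_eq_zero_of_map_mul {L : Type*} [MulOneClass L] {v : L → WithTop ℤ}
    (h1 : v 1 ≠ ⊤) (hmul : ∀ x y, v (x * y) = v x + v y) : v 1 = 0 := by
  obtain ⟨n, hn⟩ := WithTop.ne_top_iff_exists.mp h1
  have h := hmul 1 1
  rw [one_mul, ← hn, ← WithTop.coe_add, WithTop.coe_inj] at h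
  rw [← hn, show n = 0 by omega]
  rfl

theorem AddValuation.map_zpow_of_eq_one {K : Type*} [DivisionRing K]
    (v : AddValuation K (WithTop ℤ)) {x : K} (hx : v x = 1) (n : ℤ) : v (x ^ n) = n := by
  cases n with
  | ofNat n => simp [v.map_pow, hx]
  | negSucc n =>
    rw [zpow_negSucc, v.map_inv, v.map_pow, hx]
    simp [Int.negSucc_eq]

section Evv

variable {L : Type*}

theorem evv_of_eq_coe {v : L → WithTop ℤ} {a : L} {n : ℤ} (h : v a = n) :
    evv v a = ((n : ℝ) : EReal) := by
  simp [evv, h]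

theorem coe_le_evv_of_le {v : L → WithTop ℤ} {a : L} {n : ℤ} (h : (n : WithTop ℤ) ≤ v a) :
    ((n : ℝ) : EReal) ≤ evv v a := by
  cases ha : v a <;> simp_all [evv]

theorem evv_mono {v : L → WithTop ℤ} {a b : L} (h : v a ≤ v b) : evv v a ≤ evv v b := by
  cases ha : v a <;> cases hb : v b <;> simp_all [evv]

variable [Ring L] (v : AddValuation L (WithTop ℤ))

theorem evv_zero : evv v 0 = ⊤ := by
  simp [evv]

theorem evv_neg (a : L) : evv v (-a) = evv v a := by
  simp only [evv, v.map_neg]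

theorem evv_mul (a b : L) : evv v (a * b) = evv v a + evv v b := by
  simp only [evv, v.map_mul]
  cases v a <;> cases v b <;> simp [← WithTop.coe_add, ← EReal.coe_add]

theorem min_le_evv_add (a b : L) : min (evv v a) (evv v b) ≤ evv v (a + b) := by
  rcases le_total (v a) (v b) with h | h
  · exact (min_le_left _ _).trans (evv_mono ((min_eq_left h).symm.trans_le (v.map_add a b)))
  · exact (min_le_right _ _).trans (evv_mono ((min_eq_right h).symm.trans_le (v.map_add a b)))

end Evv

theorem exists_evv_eq_coe {L : Type*} [DivisionRing L] (v : AddValuation L (WithTop ℤ))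
    {a : L} (ha : a ≠ 0) : ∃ n : ℤ, evv v a = ((n : ℝ) : EReal) := by
  obtain ⟨n, hn⟩ := WithTop.ne_top_iff_exists.mp (v.ne_top_iff.mpr ha : v a ≠ (⊤ : WithTop ℤ))
  exact ⟨n, evv_of_eq_coe hn.symm⟩

section

variable {L : Type*} [Ring L] (v : AddValuation L (WithTop ℤ)) (s : ℝ)

def AboveLine (x : ℝ) (p : L[X]) : Prop :=
  ∀ i : ℕ, ((x + s * i : ℝ) : EReal) ≤ evv v (p.coeff i)

variable {v s} {x y : ℝ} {p q : L[X]}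

theorem aboveLine_zero : AboveLine v s x 0 := fun i => by
  rw [coeff_zero, evv_zero]
  exact le_top

namespace AboveLine

theorem mono (hp : AboveLine v s x p) (hyx : y ≤ x) : AboveLine v s y p := fun i =>
  (EReal.coe_le_coe_iff.mpr (by linarith)).trans (hp i)

theorem add (hp : AboveLine v s x p) (hq : AboveLine v s x q) : AboveLine v s x (p + q) :=
  fun i => by
    rw [coeff_add]
    exact (le_min (hp i) (hq i)).trans (min_le_evv_add v _ _)

theorem neg (hp : AboveLine v s x p) : AboveLine v s x (-p) := fun i => by
  rw [coeff_neg, evv_neg]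
  exact hp i

theorem sub (hp : AboveLine v s x p) (hq : AboveLine v s x q) : AboveLine v s x (p - q) := by
  rw [sub_eq_add_neg]
  exact hp.add hq.neg

theorem C_mul {a : L} (ha : (y : EReal) ≤ evv v a) (hp : AboveLine v s x p) :
    AboveLine v s (y + x) (C a * p) := fun i => by
  rw [coeff_C_mul, evv_mul, add_assoc, EReal.coe_add]
  exact add_le_add ha (hp i)

theorem X_mul (hp : AboveLine v s x p) : AboveLine v s (x - s) (X * p) := fun i => by
  cases i with
  | zero =>
    rw [coeff_X_mul_zero, evv_zero]
    exact le_top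
  | succ i =>
    rw [coeff_X_mul]
    exact (EReal.coe_le_coe_iff.mpr (by push_cast; linarith)).trans (hp i)

theorem of_X_mul (h : AboveLine v s (x - s) (X * p)) : AboveLine v s x p := fun i => by
  have hi := h (i + 1)
  rw [coeff_X_mul] at hi
  exact (EReal.coe_le_coe_iff.mpr (by push_cast; linarith)).trans hi

end AboveLine

end

section AboveLineBounds

variable {L : Type*} [DivisionRing L] {v : AddValuation L (WithTop ℤ)} {s : ℝ}

theorem exists_aboveLine (p : L[X]) : ∃ x, AboveLine v s x p := by
  choose! n hn using fun i (hi : i ∈ p.support) => exists_evv_eq_coe v (mem_support_iff.mp hi)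
  obtain ⟨x, hx⟩ := (p.support.image fun i => (n i : ℝ) - s * i).bddBelow
  refine ⟨x, fun i => ?_⟩
  by_cases hi : i ∈ p.support
  · have := hx (Finset.mem_coe.mpr (Finset.mem_image_of_mem _ hi))
    rw [hn i hi, EReal.coe_le_coe_iff]
    linarith
  · rw [notMem_support_iff.mp hi, evv_zero]
    exact le_top

theorem bddAbove_aboveLine {p : L[X]} (hp : p ≠ 0) : BddAbove {x | AboveLine v s x p} := by
  obtain ⟨n, hn⟩ := exists_evv_eq_coe v (leadingCoeff_ne_zero.mpr hp)
  refine ⟨n - s * p.natDegree, fun x hx => ?_⟩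
  have := hx p.natDegree
  rw [← leadingCoeff, hn, EReal.coe_le_coe_iff] at this
  linarith

theorem aboveLine_C_mul_iff {x : ℝ} {p : L[X]} {a : L} (ha : a ≠ 0) {k : ℤ} (hk : v a = k) :
    AboveLine v s (x + k) (C a * p) ↔ AboveLine v s x p := by
  refine ⟨fun h => ?_, fun h => add_comm x k ▸ h.C_mul (evv_of_eq_coe hk).ge⟩
  have hinv : v a⁻¹ = ((-k : ℤ) : WithTop ℤ) := by rw [v.map_inv, hk]; rfl
  have := h.C_mul (evv_of_eq_coe hinv).ge
  rwa [← mul_assoc, ← C_mul, inv_mul_cancel₀ ha, C_1, one_mul, Int.cast_neg,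
    neg_add_cancel_comm_assoc] at this

end AboveLineBounds

section NewtonPolygon

variable {L : Type*} [DivisionRing L]

theorem NP_le_evv_coeff (v : L → WithTop ℤ) {f : L[X]} {i : ℕ} (hi : i ∈ f.support) :
    NP v f i ≤ evv v (f.coeff i) :=
  sSup_le fun _ ⟨_, _, hab, hy⟩ => hy ▸ hab i hi

theorem le_NP (v : L → WithTop ℤ) {f : L[X]} {a b : ℝ}
    (h : ∀ i ∈ f.support, ((a * i + b : ℝ) : EReal) ≤ evv v (f.coeff i)) (x : ℝ) :
    ((a * x + b : ℝ) : EReal) ≤ NP v f x :=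
  le_sSup ⟨a, b, h, rfl⟩

variable {v : AddValuation L (WithTop ℤ)} {f : L[X]} {d : ℕ} {s : ℝ}

theorem aboveLine_of_NP_eq (hd : f.natDegree = d)
    (hedge : ∀ x ∈ Set.Icc (0 : ℝ) d, NP v f x = ((s * (x - d) : ℝ) : EReal)) :
    AboveLine v s (-(s * d)) f := fun i => by
  by_cases hi : i ∈ f.support
  · have hid : (i : ℝ) ≤ d := by exact_mod_cast hd ▸ le_natDegree_of_mem_supp i hi
    rw [show -(s * d) + s * i = s * (i - d) by ring, ← hedge i ⟨i.cast_nonneg, hid⟩]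
    exact NP_le_evv_coeff v hi
  · rw [notMem_support_iff.mp hi, evv_zero]
    exact le_top

theorem evv_coeff_zero_of_NP_eq (hd : f.natDegree = d)
    (hedge : ∀ x ∈ Set.Icc (0 : ℝ) d, NP v f x = ((s * (x - d) : ℝ) : EReal)) :
    evv v (f.coeff 0) = ((-(s * d) : ℝ) : EReal) := by
  have hf := aboveLine_of_NP_eq hd hedge
  refine le_antisymm ?_ (by simpa using hf 0)
  -- otherwise the line through `(0, t)`, `-s d < t < v f₀`, and `(1, s (1 - d))` also supports `f`
  by_contra! hlt
  obtain ⟨t, hst, ht⟩ := EReal.lt_iff_exists_real_btwn.mp hlt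
  rw [EReal.coe_lt_coe_iff] at hst
  have hline : ∀ i ∈ f.support,
      (((s - (t + s * d)) * i + t : ℝ) : EReal) ≤ evv v (f.coeff i) := fun i _ => by
    rcases Nat.eq_zero_or_pos i with rfl | hi
    · simpa using ht.le
    · have : (1 : ℝ) ≤ i := by exact_mod_cast hi
      exact (EReal.coe_le_coe_iff.mpr (by nlinarith)).trans (hf i)
  have := (le_NP v hline 0).trans_eq (hedge 0 ⟨le_rfl, d.cast_nonneg⟩)
  rw [EReal.coe_le_coe_iff] at this
  linarith

end NewtonPolygon

section XShift

variable {L : Type*} [DivisionRing L] {v : AddValuation L (WithTop ℤ)} {s x : ℝ} {f r : L[X]}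
  {n : ℕ}

/-- `X * r - C c * f` is the reduction of `X * r` modulo `f`. Going back, `c` is recovered from
the constant coefficient `-c f₀`, which is where `v f₀ = -s n` (and not just `≥`) is needed. -/
theorem aboveLine_X_mul_sub_iff (hf : AboveLine v s (-(s * n)) f)
    (hf0 : evv v (f.coeff 0) = ((-(s * n) : ℝ) : EReal)) :
    AboveLine v s (x - s) (X * r - C ((X * r).coeff n) * f) ↔ AboveLine v s x r := by
  set c := (X * r).coeff n
  have hcf : ∀ {y : ℝ}, ((y + s * n : ℝ) : EReal) ≤ evv v c → AboveLine v s y (C c * f) :=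
    fun hc => (hf.C_mul hc).mono (by linarith)
  constructor
  · intro h
    have h0 := h 0
    rw [coeff_sub, coeff_X_mul_zero, coeff_C_mul, zero_sub, evv_neg, evv_mul, hf0] at h0
    have hc : ((x - s + s * n : ℝ) : EReal) ≤ evv v c := by
      have := add_le_add h0 (le_refl ((s * n : ℝ) : EReal))
      rwa [add_assoc, ← EReal.coe_add (-(s * n)), neg_add_cancel, EReal.coe_zero, add_zero,
        ← EReal.coe_add, Nat.cast_zero, mul_zero, add_zero] at this
    exact AboveLine.of_X_mul (by simpa using h.add (hcf hc))
  · intro h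
    exact h.X_mul.sub (hcf (h.X_mul n))

end XShift

section NewtonGauge

variable {L : Type*} [DivisionRing L] (v : AddValuation L (WithTop ℤ)) (s : ℝ) {f : L[X]}

def ReducedAboveLine (hf : f.Monic) (x : ℝ) (q : L[X] ⧸ L[X] ∙ f) : Prop :=
  AboveLine v s x (reduce hf q)

variable {v s}

theorem shiftsBy_X (hf : f.Monic) (hfl : AboveLine v s (-(s * f.natDegree)) f)
    (hf0 : evv v (f.coeff 0) = ((-(s * f.natDegree) : ℝ) : EReal)) :
    ShiftsBy (ReducedAboveLine v s hf) (X : L[X]) (-s) := fun x q => by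
  rw [ReducedAboveLine, ReducedAboveLine, reduce_X_smul, ← sub_eq_add_neg]
  exact aboveLine_X_mul_sub_iff hfl hf0

theorem shiftsBy_C (hf : f.Monic) {a : L} (ha : a ≠ 0) {k : ℤ} (hk : v a = k) :
    ShiftsBy (ReducedAboveLine v s hf) (C a) k := fun x q => by
  rw [ReducedAboveLine, ReducedAboveLine, reduce_C_smul]
  exact aboveLine_C_mul_iff ha hk

theorem exists_forall_reducedAboveLine_of_fg (hf : f.Monic) {M : Type*} [AddCommGroup M]
    [Module L[X] M] [Module L M] (hcompat : ∀ (a : L) (m : M), a • m = (C a : L[X]) • m)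
    (e : M ≃ₗ[L[X]] L[X] ⧸ L[X] ∙ f) {O : Subring L} (hO : ∀ o ∈ O, 0 ≤ v o)
    {Λ : Submodule O M} (hΛ : Λ.FG) : ∃ A, ∀ m ∈ Λ, ReducedAboveLine v s hf A (e m) := by
  let S (x : ℝ) : Submodule O M :=
    { carrier := {m | ReducedAboveLine v s hf x (e m)}
      zero_mem' := by simp [ReducedAboveLine, reduce_zero, aboveLine_zero]
      add_mem' := fun hm hn => by
        simpa [ReducedAboveLine, reduce_add] using AboveLine.add hm hn
      smul_mem' := fun o m hm => by
        have h0 : (((0 : ℤ) : ℝ) : EReal) ≤ evv v o := coe_le_evv_of_le (hO o o.2)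
        simpa [ReducedAboveLine, Subring.smul_def, hcompat, reduce_C_smul] using
          AboveLine.C_mul h0 hm }
  obtain ⟨A, hA⟩ := hΛ.exists_le_of_antitone (S := S)
    (fun x y hxy m hm => AboveLine.mono hm hxy) (fun m => exists_aboveLine _)
  exact ⟨A, fun m hm => hA hm⟩

end NewtonGauge

theorem stmt15_general {L M : Type*} [DivisionRing L]
    [AddCommGroup M] [Module (Polynomial L) M] [Module L M]
    (hcompat : ∀ (a : L) (m : M), a • m = (Polynomial.C a : Polynomial L) • m)
    (v : L → WithTop ℤ)
    (hv0 : ∀ x : L, v x = ⊤ ↔ x = 0)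
    (hadd : ∀ x y : L, min (v x) (v y) ≤ v (x + y))
    (hmul : ∀ x y : L, v (x * y) = v x + v y)
    (O : Subring L) (hO : (O : Set L) = {x : L | 0 ≤ v x})
    (σ : L) (hσ : v σ = 1)
    (f : Polynomial L) (hmonic : f.Monic) (d : ℕ) (hd : f.natDegree = d) (hd0 : 0 < d)
    (s : ℝ)
    (hedge : ∀ x ∈ Set.Icc (0 : ℝ) (d : ℝ), NP v f x = ((s * (x - (d : ℝ)) : ℝ) : EReal))
    (hiso : Nonempty (M ≃ₗ[Polynomial L]
      (Polynomial L ⧸ Submodule.span (Polynomial L) {f})))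
    (u w : ℤ) (hu : u ≠ 0)
    (Λ' : Submodule ↥O M) (hfg : Λ'.FG)
    (hbasis : ∃ (n : ℕ) (b : Module.Basis (Fin n) L M), ∀ i, b i ∈ Λ')
    (hstable :
      (fun m : M => (Polynomial.C (σ ^ w) * Polynomial.X ^ u.toNat : Polynomial L) • m) ''
          (Λ' : Set M) =
        (fun m : M => ((Polynomial.X : Polynomial L) ^ (-u).toNat) • m) '' (Λ' : Set M)) :
    (w : ℝ) / (u : ℝ) = s := by
  obtain ⟨e⟩ := hiso
  obtain ⟨n, b, hb⟩ := hbasis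
  subst hd
  let V : AddValuation L (WithTop ℤ) := AddValuation.of v ((hv0 0).mpr rfl)
    (map_one_eq_zero_of_map_mul (fun h => one_ne_zero ((hv0 1).mp h)) hmul) hadd hmul
  let B (x : ℝ) (m : M) : Prop := ReducedAboveLine V s hmonic x (e m)
  have hX : ShiftsBy B (X : L[X]) (-s) :=
    (shiftsBy_X hmonic (aboveLine_of_NP_eq (v := V) rfl hedge)
      (evv_coeff_zero_of_NP_eq (v := V) rfl hedge)).comp e (map_smul e X)
  have hσw : ShiftsBy B (C (σ ^ w)) w :=
    (shiftsBy_C hmonic (zpow_ne_zero w fun h => by simp [h, (hv0 0).mpr rfl] at hσ)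
      (V.map_zpow_of_eq_one hσ w)).comp e (map_smul e _)
  obtain ⟨A, hA⟩ := exists_forall_reducedAboveLine_of_fg (v := V) (s := s) hmonic hcompat e
    (fun o ho => (Set.ext_iff.mp hO o).mp ho) hfg
  have := nontrivial_quotient_of_natDegree_pos hmonic hd0
  have := e.symm.injective.nontrivial
  obtain ⟨i⟩ := b.index_nonempty
  have hbdd : BddAbove {x | B x (b i)} :=
    bddAbove_aboveLine (reduce_ne_zero hmonic (e.map_ne_zero_iff.mpr (b.ne_zero i)))
  rw [Set.image_smul, Set.image_smul] at hstable
  have hPQ := (commute_X_pow (C (σ ^ w) * X ^ u.toNat) (-u).toNat).symm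
  have hP := hσw.mul (hX.pow u.toNat)
  have hQ := hX.pow (-u).toNat
  have h₁ := hP.le_of_smul_subset hQ hPQ hstable.subset hA (hb i) hbdd
  have h₂ := hQ.le_of_smul_subset hP hPQ.symm hstable.symm.subset hA (hb i) hbdd
  have hu' : (u.toNat : ℝ) - (-u).toNat = u := by exact_mod_cast Int.toNat_sub_toNat_neg u
  rw [div_eq_iff (by exact_mod_cast hu)]
  linear_combination le_antisymm h₂ h₁ + s * hu'

/-- Uniqueness of the stability slope: let `f` be monic of degree `d > 0` with
single-edge Newton polygon of slope `s`, `M = L[t]/L[t]f`.  If `u, w ∈ ℤ` with `u ≠ 0`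
and `Λ'` is an `O`-lattice in `M` with `σʷ tᵘ Λ' = Λ'` (stated multiplied out as
`σʷ t^{u⁺} Λ' = t^{u⁻} Λ'` where `u = u⁺ − u⁻`), then `w/u = s`. -/
theorem stmt15 {L M : Type*} [DivisionRing L]
    [AddCommGroup M] [Module (Polynomial L) M] [Module L M]
    (hcompat : ∀ (a : L) (m : M), a • m = (Polynomial.C a : Polynomial L) • m)
    (v : L → WithTop ℤ)
    (hv0 : ∀ x : L, v x = ⊤ ↔ x = 0)
    (hadd : ∀ x y : L, min (v x) (v y) ≤ v (x + y))
    (hmul : ∀ x y : L, v (x * y) = v x + v y)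
    (hcomplete : ∀ x : ℕ → L,
      (∀ M' : ℤ, ∃ N : ℕ, ∀ n ≥ N, (M' : WithTop ℤ) ≤ v (x n)) →
      ∃ t : L, ∀ M' : ℤ, ∃ N : ℕ, ∀ n ≥ N,
        (M' : WithTop ℤ) ≤ v (t - ∑ i ∈ Finset.range n, x i))
    (O : Subring L) (hO : (O : Set L) = {x : L | 0 ≤ v x})
    (σ : L) (hσ : v σ = 1)
    (f : Polynomial L) (hmonic : f.Monic) (d : ℕ) (hd : f.natDegree = d) (hd0 : 0 < d)
    (s : ℝ)
    (hedge : ∀ x ∈ Set.Icc (0 : ℝ) (d : ℝ), NP v f x = ((s * (x - (d : ℝ)) : ℝ) : EReal))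
    (hiso : Nonempty (M ≃ₗ[Polynomial L]
      (Polynomial L ⧸ Submodule.span (Polynomial L) {f})))
    (u w : ℤ) (hu : u ≠ 0)
    (Λ' : Submodule ↥O M) (hfg : Λ'.FG)
    (hbasis : ∃ (n : ℕ) (b : Module.Basis (Fin n) L M), ∀ i, b i ∈ Λ')
    (hstable :
      (fun m : M => (Polynomial.C (σ ^ w) * Polynomial.X ^ u.toNat : Polynomial L) • m) ''
          (Λ' : Set M) =
        (fun m : M => ((Polynomial.X : Polynomial L) ^ (-u).toNat) • m) '' (Λ' : Set M)) :
    (w : ℝ) / (u : ℝ) = s :=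
  stmt15_general hcompat v hv0 hadd hmul O hO σ hσ f hmonic d hd hd0 s hedge hiso u w hu Λ' hfg
    hbasis hstable
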